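/- Theorem 4.4(ii) (O(1/√k) rate of S-based asymptotic regularity for the relaxed G-FBS algorithm with relaxation operator M): Let (x_k) and (x̃_k) be sequences in H satisfying, for every k ∈ ℕ, Q x_k − B x_k − Q x̃_k ∈ A x̃_k and x_{k+1} = x_k + M(x̃_k − x_k); let x⋆ ∈ H satisfy −B x⋆ ∈ A x⋆; and suppose there exists η > 0 such that for every k ∈ ℕ, ‖x_k − x̃_k‖_G² ≥ η · ‖x_k − x_{k+1}‖_S² (since M⁻¹(x_k − x_{k+1}) = x_k − x̃_k, the left-hand side equals the paper's ‖x_k − x_{k+1}‖²_{M⁻ᵀ G M⁻¹}). Then for every k ∈ ℕ, ⟪S(x_{k+1} − x_k), x_{k+1} − x_k⟫ ≤ (1/(η(k+1))) · ⟪S(x_0 − x⋆), x_0 − x⋆⟫; equivalently, ‖x_{k+1} − x_k‖_S ≤ (1/√(k+1)) · (1/√η) · ‖x_0 − x⋆‖_S. -/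

import Mathlib

open RealInnerProductSpace

/-!
Write `eₖ = xₖ - x̃ₖ`, so that `xₖ - xₖ₊₁ = M eₖ` and `S M = Q`. Take two pairs with
`Q a - B a - Q ã ∈ A ã` and `Q b - B b - Q b̃ ∈ A b̃`, and put `e = (a - ã) - (b - b̃)`.
Monotonicity of `A` gives `⟪Q e, e⟫ - ⟪B a - B b, ã - b̃⟫ ≤ ⟪Q e, a - b⟫`. As `Q̃` is bounded
below by `ν` off its kernel, `ν ⟪Q̃ w, w⟫ ≤ ‖Q̃ w‖²` for all `w`; applied to `Q̃ w = B a - B b`,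
together with Cauchy–Schwarz in the `Q̃`-seminorm, AM–GM and cocoercivity, this bounds the
middle term from below by `-(β/(4ν)) ⟪Q e, e⟫`. Expanding `‖v - M e‖²_S` turns
`(1 - β/(4ν)) ⟪Q e, e⟫ ≤ ⟪Q e, v⟫` into `‖v - M e‖²_S + ‖e‖²_G ≤ ‖v‖²_S`.
With `v = xₖ - x⋆` (the second pair being `(x⋆, x⋆)`) this shows that `‖xₖ - x⋆‖²_S` decreases
by at least `‖eₖ‖²_G ≥ η ‖xₖ - xₖ₊₁‖²_S`; with `v = xₖ - xₖ₊₁` it shows that `‖xₖ - xₖ₊₁‖²_S` is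
nonincreasing. Summing, `(k + 1) η ‖xₖ - xₖ₊₁‖²_S ≤ ‖x₀ - x⋆‖²_S`.
-/

section

variable {H : Type*} [NormedAddCommGroup H] [InnerProductSpace ℝ H]

namespace ContinuousLinearMap

lemma isSymmetric_half_smul_add_adjoint [CompleteSpace H] (T : H →L[ℝ] H) :
    (((1 / 2 : ℝ) • (T + adjoint T) : H →L[ℝ] H) : H →ₗ[ℝ] H).IsSymmetric :=
  isSelfAdjoint_iff_isSymmetric.mp <|
    (IsSelfAdjoint.all _).smul (star_eq_adjoint T ▸ IsSelfAdjoint.add_star_self T)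

lemma inner_half_smul_add_adjoint_apply_self [CompleteSpace H] (T : H →L[ℝ] H) (x : H) :
    ⟪((1 / 2 : ℝ) • (T + adjoint T)) x, x⟫ = ⟪T x, x⟫ := by
  rw [smul_apply, add_apply, real_inner_smul_left, inner_add_left, adjoint_inner_left,
    real_inner_comm x]
  ring

lemma inner_smul_add_adjoint_sub_adjoint_comp_apply_self [CompleteSpace H] (Q T : H →L[ℝ] H)
    (c : ℝ) (d : H) :
    ⟪(c • (Q + adjoint Q) - adjoint T ∘L Q) d, d⟫ = 2 * c * ⟪Q d, d⟫ - ⟪Q d, T d⟫ := by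
  rw [sub_apply, smul_apply, add_apply, comp_apply, inner_sub_left, real_inner_smul_left,
    inner_add_left, adjoint_inner_left, adjoint_inner_left, real_inner_comm d]
  ring

lemma mul_inner_apply_self_le_norm_sq [CompleteSpace H] {P : H →L[ℝ] H}
    (hP : (P : H →ₗ[ℝ] H).IsSymmetric) {ν : ℝ} (hν : 0 ≤ ν)
    (hνP : ∀ w ∈ (LinearMap.ker (P : H →ₗ[ℝ] H))ᗮ, ν * ‖w‖ ≤ ‖P w‖) (w : H) :
    ν * ⟪P w, w⟫ ≤ ‖P w‖ ^ 2 := by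
  obtain ⟨a, ha, b, hb, rfl⟩ :=
    (LinearMap.ker (P : H →ₗ[ℝ] H)).exists_add_mem_mem_orthogonal w
  have hPa : P a = 0 := ha
  have hPba : ⟪P b, a⟫ = 0 := by rw [← coe_coe, hP, coe_coe, hPa, inner_zero_right]
  rw [map_add, hPa, zero_add, inner_add_right, hPba, zero_add]
  calc ν * ⟪P b, b⟫
      ≤ ν * (‖P b‖ * ‖b‖) := mul_le_mul_of_nonneg_left (real_inner_le_norm _ _) hν
    _ = ‖P b‖ * (ν * ‖b‖) := by ring
    _ ≤ ‖P b‖ * ‖P b‖ := mul_le_mul_of_nonneg_left (hνP b hb) (norm_nonneg _)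
    _ = ‖P b‖ ^ 2 := (sq _).symm

lemma quadratic_nonneg_of_mul_inner_apply_self_le {P : H →L[ℝ] H} (hP : P.IsPositive) {ν : ℝ}
    (hν : 0 ≤ ν) (hνP : ∀ w, ν * ⟪P w, w⟫ ≤ ‖P w‖ ^ 2) (w z : H) (t : ℝ) :
    0 ≤ 4 * ν * ‖P w‖ ^ 2 + 4 * ν * t * ⟪P w, z⟫ + t ^ 2 * ⟪P z, z⟫ := by
  have hpos := hP.inner_nonneg_left ((2 * ν) • w + t • z)
  have hzw : ⟪P z, w⟫ = ⟪P w, z⟫ := by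
    rw [hP.inner_left_eq_inner_right, real_inner_comm]
  simp only [map_add, map_smul, inner_add_left, inner_add_right, real_inner_smul_left,
    real_inner_smul_right, hzw] at hpos
  nlinarith [mul_le_mul_of_nonneg_left (hνP w) (by positivity : (0 : ℝ) ≤ 4 * ν)]

lemma neg_mul_inner_le_inner_of_cocoercive {P : H →L[ℝ] H} (hP : P.IsPositive) {ν : ℝ}
    (hν : 0 < ν) (hνP : ∀ w, ν * ⟪P w, w⟫ ≤ ‖P w‖ ^ 2) {β : ℝ} (hβ : 0 ≤ β) {B : H → H}
    (hB : ∀ x y, ‖B x - B y‖ ^ 2 ≤ β * ⟪B x - B y, x - y⟫) (hBP : Set.range B ⊆ Set.range P)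
    (a b y : H) :
    -(β / (4 * ν)) * ⟪P (a - b - y), a - b - y⟫ ≤ ⟪B a - B b, y⟫ := by
  rcases hβ.eq_or_lt with rfl | hβ
  · have hBab : B a - B b = 0 := by simpa using hB a b
    simp [hBab]
  obtain ⟨w₁, hw₁⟩ := hBP ⟨a, rfl⟩
  obtain ⟨w₂, hw₂⟩ := hBP ⟨b, rfl⟩
  have hw : P (w₁ - w₂) = B a - B b := by rw [map_sub, hw₁, hw₂]
  have hquad := quadratic_nonneg_of_mul_inner_apply_self_le hP hν.le hνP (w₁ - w₂)
    (-(a - b - y)) β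
  rw [hw, map_neg, inner_neg_neg, inner_neg_right, inner_sub_right (B a - B b)] at hquad
  have hscaled : 0 ≤ β * (4 * ν * ⟪B a - B b, y⟫ + β * ⟪P (a - b - y), a - b - y⟫) := by
    linarith [mul_le_mul_of_nonneg_left (hB a b) (by positivity : (0 : ℝ) ≤ 4 * ν)]
  have hsum := nonneg_of_mul_nonneg_right hscaled hβ
  calc -(β / (4 * ν)) * ⟪P (a - b - y), a - b - y⟫
      = ⟪B a - B b, y⟫ -
          (4 * ν * ⟪B a - B b, y⟫ + β * ⟪P (a - b - y), a - b - y⟫) / (4 * ν) := by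
        field_simp
        ring
    _ ≤ ⟪B a - B b, y⟫ := sub_le_self _ (by positivity)

end ContinuousLinearMap

lemma fbs_residual_inner_le {Q : H →L[ℝ] H} {B : H → H} {A : H → Set H} {κ : ℝ}
    (hB : ∀ a b y, -κ * ⟪Q (a - b - y), a - b - y⟫ ≤ ⟪B a - B b, y⟫)
    (hA : ∀ x y u v, u ∈ A x → v ∈ A y → 0 ≤ ⟪u - v, x - y⟫) {a ta b tb : H}
    (ha : Q a - B a - Q ta ∈ A ta) (hb : Q b - B b - Q tb ∈ A tb) :
    (1 - κ) * ⟪Q (a - ta - (b - tb)), a - ta - (b - tb)⟫ ≤ ⟪Q (a - ta - (b - tb)), a - b⟫ := by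
  have hmono := hA _ _ _ _ ha hb
  have hBab := hB a b (ta - tb)
  rw [show a - b - (ta - tb) = a - ta - (b - tb) by abel] at hBab
  have hsplit : ⟪Q (a - ta - (b - tb)), ta - tb⟫ =
      ⟪Q (a - ta - (b - tb)), a - b⟫ - ⟪Q (a - ta - (b - tb)), a - ta - (b - tb)⟫ := by
    rw [← inner_sub_right]
    congr 1
    abel
  rw [show Q a - B a - Q ta - (Q b - B b - Q tb) = Q (a - ta - (b - tb)) - (B a - B b) by
      simp only [map_sub]; abel, inner_sub_left, hsplit] at hmono
  linarith

lemma inner_apply_sub_self_add_inner_le {S Q G T : H →L[ℝ] H}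
    (hS : (S : H →ₗ[ℝ] H).IsSymmetric) (hST : ∀ v, S (T v) = Q v) {c : ℝ}
    (hG : ∀ d, ⟪G d, d⟫ = 2 * c * ⟪Q d, d⟫ - ⟪Q d, T d⟫)
    {v d : H} (hvd : c * ⟪Q d, d⟫ ≤ ⟪Q d, v⟫) :
    ⟪S (v - T d), v - T d⟫ + ⟪G d, d⟫ ≤ ⟪S v, v⟫ := by
  have hSv : ⟪S v, T d⟫ = ⟪Q d, v⟫ := by
    rw [← ContinuousLinearMap.coe_coe, hS, ContinuousLinearMap.coe_coe, hST, real_inner_comm]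
  rw [map_sub, hST, inner_sub_left, inner_sub_right, inner_sub_right, hSv, hG d]
  linarith

lemma le_one_div_mul_of_antitone_of_descent {φ ψ : ℕ → ℝ} {η : ℝ} (hη : 0 < η)
    (hφ : ∀ k, φ (k + 1) + η * ψ k ≤ φ k) (hφ_nonneg : ∀ k, 0 ≤ φ k) (hψ : Antitone ψ)
    (k : ℕ) : ψ k ≤ 1 / (η * (k + 1)) * φ 0 := by
  have hsum : ∀ k : ℕ, φ (k + 1) + η * (k + 1) * ψ k ≤ φ 0 := by
    intro k
    induction k with
    | zero => simpa using hφ 0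
    | succ n ih =>
      have hψn := mul_le_mul_of_nonneg_left (hψ n.le_succ) (by positivity : 0 ≤ η * (n + 1))
      push_cast
      linarith [hφ (n + 1)]
  rw [one_div_mul_eq_div, le_div_iff₀ (by positivity), mul_comm]
  linarith [hsum k, hφ_nonneg (k + 1)]

end

theorem stmt_19_general
    {H : Type*} [NormedAddCommGroup H] [InnerProductSpace ℝ H] [CompleteSpace H]
    (Q : H →L[ℝ] H)
    (Qt : H →L[ℝ] H) (hQt : Qt = (1 / 2 : ℝ) • (Q + ContinuousLinearMap.adjoint Q))
    (hQtpos : ∀ x : H, 0 ≤ ⟪Qt x, x⟫)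
    (ν : ℝ) (hν : 0 < ν)
    (hνQ : ∀ w ∈ (LinearMap.ker (Qt : H →ₗ[ℝ] H))ᗮ, ν * ‖w‖ ≤ ‖Qt w‖)
    (M : H ≃L[ℝ] H)
    (β : ℝ) (hβ : 0 ≤ β)
    (B : H → H)
    (hB : ∀ x y : H, ‖B x - B y‖ ^ 2 ≤ β * ⟪B x - B y, x - y⟫)
    (hranB : Set.range B ⊆ Set.range Qt)
    (S : H →L[ℝ] H) (hS : S = Q ∘L (M.symm : H →L[ℝ] H))
    (hSsym : ∀ x y : H, ⟪S x, y⟫ = ⟪x, S y⟫)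
    (hSpos : ∀ x : H, 0 ≤ ⟪S x, x⟫)
    (G : H →L[ℝ] H)
    (hG : G = (1 - β / (4 * ν)) • (Q + ContinuousLinearMap.adjoint Q) -
      (ContinuousLinearMap.adjoint (M : H →L[ℝ] H)) ∘L Q)
    (hGpos : ∀ x : H, 0 ≤ ⟪G x, x⟫)
    (A : H → Set H)
    (hA : ∀ x y u v : H, u ∈ A x → v ∈ A y → 0 ≤ ⟪u - v, x - y⟫)
    (x xt : ℕ → H)
    (hxt : ∀ k : ℕ, Q (x k) - B (x k) - Q (xt k) ∈ A (xt k))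
    (hstep : ∀ k : ℕ, x (k + 1) = x k + M (xt k - x k))
    (xs : H) (hxs : -B xs ∈ A xs)
    (η : ℝ) (hη : 0 < η)
    (hηG : ∀ k : ℕ, η * ⟪S (x k - x (k + 1)), x k - x (k + 1)⟫ ≤
      ⟪G (x k - xt k), x k - xt k⟫) :
    ∀ k : ℕ, ⟪S (x (k + 1) - x k), x (k + 1) - x k⟫ ≤
      (1 / (η * ((k : ℝ) + 1))) * ⟪S (x 0 - xs), x 0 - xs⟫ := by
  have hQt_symm : (Qt : H →ₗ[ℝ] H).IsSymmetric :=
    hQt ▸ ContinuousLinearMap.isSymmetric_half_smul_add_adjoint Q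
  have hQt_psd : Qt.IsPositive := (Qt.isPositive_iff).mpr ⟨hQt_symm, hQtpos⟩
  have hQtQ : ∀ e, ⟪Qt e, e⟫ = ⟪Q e, e⟫ :=
    hQt ▸ ContinuousLinearMap.inner_half_smul_add_adjoint_apply_self Q
  have hBQ : ∀ a b y, -(β / (4 * ν)) * ⟪Q (a - b - y), a - b - y⟫ ≤ ⟪B a - B b, y⟫ := by
    intro a b y
    rw [← hQtQ]
    exact ContinuousLinearMap.neg_mul_inner_le_inner_of_cocoercive hQt_psd hν
      (ContinuousLinearMap.mul_inner_apply_self_le_norm_sq hQt_symm hν.le hνQ) hβ hB hranB a b y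
  set T : H →L[ℝ] H := (M : H →L[ℝ] H)
  have hSM : ∀ v, S (T v) = Q v := by simp [T, hS]
  have hGQ : ∀ d, ⟪G d, d⟫ = 2 * (1 - β / (4 * ν)) * ⟪Q d, d⟫ - ⟪Q d, T d⟫ :=
    hG ▸ ContinuousLinearMap.inner_smul_add_adjoint_sub_adjoint_comp_apply_self Q T _
  have hdiff : ∀ k, x k - x (k + 1) = T (x k - xt k) := by
    intro k
    rw [hstep k, ← neg_sub (x k), map_neg]
    abel
  have hdescent : ∀ k, ⟪S (x (k + 1) - xs), x (k + 1) - xs⟫ +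
      η * ⟪S (x k - x (k + 1)), x k - x (k + 1)⟫ ≤ ⟪S (x k - xs), x k - xs⟫ := by
    intro k
    have := inner_apply_sub_self_add_inner_le hSsym hSM hGQ
      (fbs_residual_inner_le hBQ hA (hxt k)
        (show Q xs - B xs - Q xs ∈ A xs by simpa using hxs))
    rw [sub_self, sub_zero, ← hdiff, sub_sub_sub_cancel_left] at this
    linarith [hηG k]
  have hmono : Antitone fun k => ⟪S (x k - x (k + 1)), x k - x (k + 1)⟫ := by
    refine antitone_nat_of_succ_le fun k => ?_
    have := inner_apply_sub_self_add_inner_le hSsym hSM hGQ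
      (fbs_residual_inner_le hBQ hA (hxt k) (hxt (k + 1)))
    rw [map_sub T, ← hdiff, ← hdiff, sub_sub_cancel] at this
    linarith [hGpos (x k - xt k - (x (k + 1) - xt (k + 1)))]
  intro k
  simpa only [← neg_sub (x k), map_neg, inner_neg_neg] using
    le_one_div_mul_of_antitone_of_descent (φ := fun k => ⟪S (x k - xs), x k - xs⟫) hη hdescent
      (fun k => hSpos _) hmono k

/-- Theorem 4.4(ii): `O(1/√k)` rate of `S`-based asymptotic regularity for the
relaxed G-FBS algorithm with relaxation operator `M`. -/
theorem stmt_19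
    {H : Type*} [NormedAddCommGroup H] [InnerProductSpace ℝ H] [CompleteSpace H]
    (Q : H →L[ℝ] H)
    (Qt : H →L[ℝ] H) (hQt : Qt = (1 / 2 : ℝ) • (Q + ContinuousLinearMap.adjoint Q))
    (hQtpos : ∀ x : H, 0 ≤ ⟪Qt x, x⟫)
    (ν : ℝ) (hν : 0 < ν)
    (hνQ : ∀ w ∈ (LinearMap.ker (Qt : H →ₗ[ℝ] H))ᗮ, ν * ‖w‖ ≤ ‖Qt w‖)
    (M : H ≃L[ℝ] H)
    (β : ℝ) (hβ : 0 ≤ β)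
    (B : H → H)
    (hB : ∀ x y : H, ‖B x - B y‖ ^ 2 ≤ β * ⟪B x - B y, x - y⟫)
    (hranB : Set.range B ⊆ Set.range Qt)
    (S : H →L[ℝ] H) (hS : S = Q ∘L (M.symm : H →L[ℝ] H))
    (hSsym : ∀ x y : H, ⟪S x, y⟫ = ⟪x, S y⟫)
    (hSpos : ∀ x : H, 0 ≤ ⟪S x, x⟫)
    (G : H →L[ℝ] H)
    (hG : G = (1 - β / (4 * ν)) • (Q + ContinuousLinearMap.adjoint Q) -
      (ContinuousLinearMap.adjoint (M : H →L[ℝ] H)) ∘L Q)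
    (hGsym : ∀ x y : H, ⟪G x, y⟫ = ⟪x, G y⟫)
    (hGpos : ∀ x : H, 0 ≤ ⟪G x, x⟫)
    (A : H → Set H)
    (hA : ∀ x y u v : H, u ∈ A x → v ∈ A y → 0 ≤ ⟪u - v, x - y⟫)
    (x xt : ℕ → H)
    (hxt : ∀ k : ℕ, Q (x k) - B (x k) - Q (xt k) ∈ A (xt k))
    (hstep : ∀ k : ℕ, x (k + 1) = x k + M (xt k - x k))
    (xs : H) (hxs : -B xs ∈ A xs)
    (η : ℝ) (hη : 0 < η)
    (hηG : ∀ k : ℕ, η * ⟪S (x k - x (k + 1)), x k - x (k + 1)⟫ ≤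
      ⟪G (x k - xt k), x k - xt k⟫) :
    ∀ k : ℕ, ⟪S (x (k + 1) - x k), x (k + 1) - x k⟫ ≤
      (1 / (η * ((k : ℝ) + 1))) * ⟪S (x 0 - xs), x 0 - xs⟫ :=
  stmt_19_general Q Qt hQt hQtpos ν hν hνQ M β hβ B hB hranB S hS hSsym hSpos G hG hGpos A hA x xt
    hxt hstep xs hxs η hη hηG
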